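/- Suppose Z ∈ 𝔷_M, w ∈ W*(Z), f ∈ L∞^w, and suppose intervals I and J satisfy I ⊆ J ⊆ [-1,1] and |J| ≤ c₀|I|. Then, for any r ∈ ℕ, if q ∈ 𝒫_r is a polynomial of near best approximation to f on I with weight w, i.e., ‖w(f-q)‖_I ≤ c₁ E_r(f, I)_w, then q is also a polynomial of near best approximation to f on J: ‖w(f-q)‖_J ≤ c E_r(f, J)_w, where the constant c depends only on r, c₀, c₁, and the weight w. -/

import Mathlib

/-!
Let `Q` be a near best approximant to `f` on `J`. Then
`‖w(f-q)‖_J ≤ ‖w(f-Q)‖_J + ‖w(Q-q)‖_J`, and everything rests on the comparison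
`‖w P‖_J ≤ C ‖w P‖_I` for `P ∈ 𝒫_r` and `I ⊆ J` with `|J| ≤ c₀|I|`: applied to `P = Q - q` it
bounds the last term by `C (‖w(f-q)‖_I + ‖w(f-Q)‖_I) ≲ E_r(f, J)_w`.

An A* weight with constant `L` is doubling, and it keeps at least half of its mass on `I`
outside any set of measure `≤ |I|/(2L)`. By a Remez-type inequality, `|P| ≥ κ ‖P‖_J` on `I`
outside such a set, so
`‖w P‖_I |I| ≳ ‖P‖_J ∫_I w ≳ ‖P‖_J ∫_J w ≳ ‖w P‖_J |J|`.
-/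

open MeasureTheory Set
open scoped BigOperators

noncomputable section

/-- `φ(x) = √(1 - x²)`. -/
def phi (x : ℝ) : ℝ := Real.sqrt (1 - x ^ 2)

/-- `ρ(h, x) = hφ(x) + h²`. -/
def rho (h x : ℝ) : ℝ := h * phi x + h ^ 2

/-- `ρ_n(x) = φ(x)/n + 1/n²`. -/
def rhoN (n : ℕ) (x : ℝ) : ℝ := phi x / n + 1 / (n : ℝ) ^ 2

/-- The averaged weight `w_n(x) = ρ_n(x)⁻¹ ∫_{x-ρ_n(x)}^{x+ρ_n(x)} w(u) du`. -/
def wAvg (w : ℝ → ℝ) (n : ℕ) (x : ℝ) : ℝ :=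
  (rhoN n x)⁻¹ * ∫ u in (x - rhoN n x)..(x + rhoN n x), w u

/-- Essential sup norm of `g` on `S ⊆ ℝ`. -/
def supNorm (g : ℝ → ℝ) (S : Set ℝ) : ℝ :=
  essSup (fun x => |g x|) (volume.restrict S)

/-- `w` is an A* weight on `[-1,1]` with A* constant `L`: nonnegative, integrable, and
`w(x) ≤ (L/|I|) ∫_I w` for every interval `I ⊆ [-1,1]` and every `x ∈ I`. -/
def AStarWith (w : ℝ → ℝ) (L : ℝ) : Prop :=
  0 < L ∧ (∀ x, 0 ≤ w x) ∧ IntegrableOn w (Icc (-1 : ℝ) 1) ∧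
    ∀ a b : ℝ, -1 ≤ a → a < b → b ≤ 1 → ∀ x ∈ Icc a b,
      w x ≤ L / (b - a) * ∫ u in a..b, w u

/-- `w` is an A* weight. -/
def AStar (w : ℝ → ℝ) : Prop := ∃ L : ℝ, AStarWith w L

/-- `w` vanishes outside `[-1,1]` (weights are extended by zero outside `[-1,1]`). -/
def ZeroOutside (w : ℝ → ℝ) : Prop := ∀ x, x ∉ Icc (-1 : ℝ) 1 → w x = 0

/-- `g` is (the function given by) an algebraic polynomial of degree `≤ n - 1`,
i.e. `g ∈ 𝒫_n`. -/
def IsPolyDeg (n : ℕ) (g : ℝ → ℝ) : Prop :=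
  ∃ p : Polynomial ℝ, p.degree < (n : WithBot ℕ) ∧ ∀ x, g x = p.eval x

/-- Weighted best approximation `E_n(f, S)_w := inf_{q ∈ 𝒫_n} ‖w (f - q)‖_S`. -/
def Edeg (n : ℕ) (f : ℝ → ℝ) (S : Set ℝ) (w : ℝ → ℝ) : ℝ :=
  sInf {v : ℝ | ∃ q : ℝ → ℝ, IsPolyDeg n q ∧ v = supNorm (fun x => w x * (f x - q x)) S}

/-- `f ∈ L∞^w`, i.e. `‖w f‖_{[-1,1]} < ∞`. -/
def MemLinftyW (w f : ℝ → ℝ) : Prop :=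
  ∃ C : ℝ, ∀ᵐ x ∂(volume.restrict (Icc (-1 : ℝ) 1)), |w x * f x| ≤ C

/-- `Z_{A,h}^j := {x ∈ [-1,1] : |x - z_j| ≤ A ρ(h, z_j)}`. -/
def Zj (M : ℕ) (z : Fin M → ℝ) (A h : ℝ) (j : Fin M) : Set ℝ :=
  {x ∈ Icc (-1 : ℝ) 1 | |x - z j| ≤ A * rho h (z j)}

/-- `I_{A,h} := {x ∈ [-1,1] : |x - z_j| ≥ A ρ(h, z_j) for all j}`. -/
def Iah (M : ℕ) (z : Fin M → ℝ) (A h : ℝ) : Set ℝ :=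
  {x ∈ Icc (-1 : ℝ) 1 | ∀ j : Fin M, A * rho h (z j) ≤ |x - z j|}

/-- The class `W*(Z)`: `w` is an A* weight and there is `c* > 0` such that
`c* w(y) ≤ w(x) ≤ c*⁻¹ w(y)` whenever `x, y ∈ [-1,1]`, `|x - y| ≤ ρ(ε, x)` and
`dist([x,y], z_j) ≥ ρ(ε, z_j)` for all `j`. -/
def WStar (M : ℕ) (z : Fin M → ℝ) (w : ℝ → ℝ) : Prop :=
  AStar w ∧ ∃ c : ℝ, 0 < c ∧ ∀ ε : ℝ, 0 < ε → ∀ x y : ℝ,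
    x ∈ Icc (-1 : ℝ) 1 → y ∈ Icc (-1 : ℝ) 1 → |x - y| ≤ rho ε x →
    (∀ j : Fin M, ∀ u ∈ uIcc x y, rho ε (z j) ≤ |u - z j|) →
    c * w y ≤ w x ∧ w x ≤ c⁻¹ * w y

open Classical in
/-- The `r`-th symmetric difference `Δ_h^r(f, x, J)`. -/
def symmDiffR (r : ℕ) (h : ℝ) (f : ℝ → ℝ) (x : ℝ) (J : Set ℝ) : ℝ :=
  if Icc (x - r * h / 2) (x + r * h / 2) ⊆ J then
    ∑ i ∈ Finset.range (r + 1),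
      (-1 : ℝ) ^ (r - i) * (r.choose i : ℝ) * f (x - r * h / 2 + i * h)
  else 0

/-- Main part weighted modulus of smoothness
`Ω_φ^r(f, A, t)_w := sup_{0 < h ≤ t} ‖w(·) Δ_{hφ(·)}^r(f, ·, I_{A,h})‖`. -/
def OmegaMod (M : ℕ) (z : Fin M → ℝ) (w f : ℝ → ℝ) (r : ℕ) (A t : ℝ) : ℝ :=
  sSup {v : ℝ | ∃ h : ℝ, 0 < h ∧ h ≤ t ∧
    v = supNorm (fun x => w x * symmDiffR r (h * phi x) f x (Iah M z A h)) (Icc (-1 : ℝ) 1)}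

/-- Restricted main part modulus `Ω_φ^r(f, t)_{S, w}`. -/
def OmegaRest (w f : ℝ → ℝ) (S : Set ℝ) (r : ℕ) (t : ℝ) : ℝ :=
  sSup {v : ℝ | ∃ h : ℝ, 0 < h ∧ h ≤ t ∧
    v = supNorm (fun x => w x * symmDiffR r (h * phi x) f x S) (Icc (-1 : ℝ) 1)}

/-- Complete weighted modulus of smoothness
`ω_φ^r(f, A, B, t)_w := Ω_φ^r(f, A, t)_w + Σ_j E_r(f, Z_{B,t}^j)_w`. -/
def omegaMod (M : ℕ) (z : Fin M → ℝ) (w f : ℝ → ℝ) (r : ℕ) (A B t : ℝ) : ℝ :=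
  OmegaMod M z w f r A t + ∑ j : Fin M, Edeg r f (Zj M z B t j) w

/-- The extended sequence `z_0 = -1, z_1, ..., z_M, z_{M+1} = 1`. -/
def zext (M : ℕ) (z : Fin M → ℝ) (i : Fin (M + 2)) : ℝ :=
  if h : (i : ℕ) = 0 then -1
  else if h2 : (i : ℕ) ≤ M then z ⟨(i : ℕ) - 1, by omega⟩
  else 1

/-- `𝔇`: the smallest positive gap between consecutive points of `-1, z_1, ..., z_M, 1`. -/
def Dgap (M : ℕ) (z : Fin M → ℝ) : ℝ :=
  sInf {d : ℝ | 0 < d ∧ ∃ i : Fin (M + 1), d = zext M z i.succ - zext M z i.castSucc}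

/-- Two-sided equivalence with constants: `c a ≤ b ≤ c' a`. -/
def EquivBy (c c' a b : ℝ) : Prop := c * a ≤ b ∧ b ≤ c' * a

/-- The `r`-th derivative of a polynomial, as a function on `ℝ`. -/
def polyDeriv (r : ℕ) (p : Polynomial ℝ) : ℝ → ℝ :=
  fun x => ((fun q : Polynomial ℝ => Polynomial.derivative q)^[r] p).eval x

/-- The realization functional
`R_{r,φ}(f, t, 𝒫_n)_w := inf_{P ∈ 𝒫_n} (‖w(f - P)‖ + t^r ‖w φ^r P^{(r)}‖)`. -/
def Rfunc (r : ℕ) (f : ℝ → ℝ) (t : ℝ) (n : ℕ) (w : ℝ → ℝ) : ℝ :=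
  sInf {v : ℝ | ∃ p : Polynomial ℝ, p.degree < (n : WithBot ℕ) ∧
    v = supNorm (fun x => w x * (f x - p.eval x)) (Icc (-1 : ℝ) 1) +
      t ^ r * supNorm (fun x => w x * phi x ^ r * polyDeriv r p x) (Icc (-1 : ℝ) 1)}


open Filter

def EssBddOn (g : ℝ → ℝ) (S : Set ℝ) : Prop :=
  ∃ B : ℝ, ∀ᵐ x ∂(volume.restrict S), |g x| ≤ B

section SupNorm

variable {g h k : ℝ → ℝ} {S T : Set ℝ}

theorem EssBddOn.of_forall (hS : MeasurableSet S) {B : ℝ} (hB : ∀ x ∈ S, |g x| ≤ B) :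
    EssBddOn g S :=
  ⟨B, (ae_restrict_iff' hS).2 (Eventually.of_forall hB)⟩

theorem EssBddOn.mono (hg : EssBddOn g T) (hST : S ⊆ T) : EssBddOn g S :=
  let ⟨B, hB⟩ := hg
  ⟨B, ae_restrict_of_ae_restrict_of_subset hST hB⟩

theorem EssBddOn.of_abs_le_add (hg : EssBddOn g S) (hh : EssBddOn h S)
    (hk : ∀ x, |k x| ≤ |g x| + |h x|) : EssBddOn k S := by
  obtain ⟨B, hB⟩ := hg
  obtain ⟨B', hB'⟩ := hh
  exact ⟨B + B', by filter_upwards [hB, hB'] with x h₁ h₂ using (hk x).trans (add_le_add h₁ h₂)⟩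

-- Over a null set, `essSup` in `ℝ` is the junk value `sInf univ = 0`.
theorem supNorm_of_volume_eq_zero (hS : volume S = 0) : supNorm g S = 0 := by
  rw [supNorm, Measure.restrict_eq_zero.2 hS, essSup, ae_zero, limsup_eq]
  simp

theorem supNorm_le {B : ℝ} (hB : 0 ≤ B) (h : ∀ᵐ x ∂(volume.restrict S), |g x| ≤ B) :
    supNorm g S ≤ B := by
  by_cases hS : volume S = 0
  · exact (supNorm_of_volume_eq_zero hS).trans_le hB
  have : (ae (volume.restrict S)).NeBot := ae_neBot.2 (by simpa using hS)
  exact essSup_le_of_ae_le B h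
    (isCoboundedUnder_le_of_eventually_le _ (Eventually.of_forall fun x => abs_nonneg (g x)))

theorem supNorm_nonneg (g : ℝ → ℝ) (S : Set ℝ) : 0 ≤ supNorm g S := by
  by_cases hS : volume S = 0
  · exact (supNorm_of_volume_eq_zero hS).ge
  have : (ae (volume.restrict S)).NeBot := ae_neBot.2 (by simpa using hS)
  rw [supNorm, essSup, limsup_eq]
  refine Real.sInf_nonneg fun a ha => ?_
  obtain ⟨x, hx⟩ := Eventually.exists (f := ae (volume.restrict S)) ha
  exact (abs_nonneg _).trans hx

theorem supNorm_le_of_forall (hS : MeasurableSet S) {B : ℝ} (hB : 0 ≤ B)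
    (h : ∀ x ∈ S, |g x| ≤ B) : supNorm g S ≤ B :=
  supNorm_le hB ((ae_restrict_iff' hS).2 (Eventually.of_forall h))

theorem EssBddOn.ae_le_supNorm (hg : EssBddOn g S) :
    ∀ᵐ x ∂(volume.restrict S), |g x| ≤ supNorm g S :=
  let ⟨B, hB⟩ := hg
  ae_le_essSup ⟨B, eventually_map.2 hB⟩

theorem supNorm_mono_set (hST : S ⊆ T) (hg : EssBddOn g T) : supNorm g S ≤ supNorm g T :=
  supNorm_le (supNorm_nonneg g T) (ae_restrict_of_ae_restrict_of_subset hST hg.ae_le_supNorm)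

theorem supNorm_le_add (hg : EssBddOn g S) (hh : EssBddOn h S)
    (hk : ∀ x, |k x| ≤ |g x| + |h x|) : supNorm k S ≤ supNorm g S + supNorm h S :=
  supNorm_le (add_nonneg (supNorm_nonneg g S) (supNorm_nonneg h S)) <| by
    filter_upwards [hg.ae_le_supNorm, hh.ae_le_supNorm] with x h₁ h₂
    exact (hk x).trans (add_le_add h₁ h₂)

end SupNorm

section BestApproximation

variable {n : ℕ} {f w q : ℝ → ℝ} {S T : Set ℝ}

theorem isPolyDeg_zero (n : ℕ) : IsPolyDeg n 0 :=
  ⟨0, by simp, fun _ => by simp⟩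

theorem IsPolyDeg.sub {g h : ℝ → ℝ} (hg : IsPolyDeg n g) (hh : IsPolyDeg n h) :
    IsPolyDeg n (g - h) :=
  let ⟨p, hp, hpg⟩ := hg
  let ⟨p', hp', hph⟩ := hh
  ⟨p - p', (Polynomial.degree_sub_le _ _).trans_lt (max_lt hp hp'), fun x => by simp [hpg, hph]⟩

theorem Edeg_le (hq : IsPolyDeg n q) : Edeg n f S w ≤ supNorm (fun x => w x * (f x - q x)) S :=
  csInf_le ⟨0, by rintro _ ⟨q, -, rfl⟩; exact supNorm_nonneg _ _⟩ ⟨q, hq, rfl⟩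

theorem le_Edeg {c : ℝ} (h : ∀ q, IsPolyDeg n q → c ≤ supNorm (fun x => w x * (f x - q x)) S) :
    c ≤ Edeg n f S w :=
  le_csInf ⟨_, 0, isPolyDeg_zero n, rfl⟩ (by rintro _ ⟨q, hq, rfl⟩; exact h q hq)

theorem Edeg_mono (hST : S ⊆ T)
    (hbdd : ∀ q, IsPolyDeg n q → EssBddOn (fun x => w x * (f x - q x)) T) :
    Edeg n f S w ≤ Edeg n f T w :=
  le_Edeg fun q hq => (Edeg_le hq).trans (supNorm_mono_set hST (hbdd q hq))

end BestApproximation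

theorem exists_Icc_of_length_between {a b a' b' s : ℝ} (ha : a' ≤ a) (hb : b ≤ b')
    (hs : b - a ≤ s) (hs' : s ≤ b' - a') :
    ∃ c d, a' ≤ c ∧ c ≤ a ∧ b ≤ d ∧ d ≤ b' ∧ d - c = s := by
  refine ⟨max a' (b - s), max a' (b - s) + s, le_max_left _ _, max_le ha (by linarith),
    by linarith [le_max_right a' (b - s)], ?_, by ring⟩
  rcases max_cases a' (b - s) with ⟨h, -⟩ | ⟨h, -⟩ <;> linarith

namespace AStarWith

variable {w f : ℝ → ℝ} {L a b a' b' : ℝ}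

theorem integrableOn_Icc (hw : AStarWith w L) (ha : -1 ≤ a) (hb : b ≤ 1) :
    IntegrableOn w (Icc a b) :=
  hw.2.2.1.mono_set (Icc_subset_Icc ha hb)

theorem le_setIntegral (hw : AStarWith w L) (ha : -1 ≤ a) (hab : a < b) (hb : b ≤ 1) {x : ℝ}
    (hx : x ∈ Icc a b) : w x ≤ L / (b - a) * ∫ u in Icc a b, w u := by
  rw [integral_Icc_eq_integral_Ioc, ← intervalIntegral.integral_of_le hab.le]
  exact hw.2.2.2 a b ha hab hb x hx

theorem setIntegral_nonneg (hw : AStarWith w L) (S : Set ℝ) : 0 ≤ ∫ u in S, w u :=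
  integral_nonneg hw.2.1

theorem essBddOn_mul_sub {n : ℕ} {q : ℝ → ℝ} (hw : AStarWith w L) (hf : MemLinftyW w f)
    (hq : IsPolyDeg n q) : EssBddOn (fun x => w x * (f x - q x)) (Icc (-1) 1) := by
  obtain ⟨Cf, hCf⟩ := hf
  obtain ⟨p, -, hpq⟩ := hq
  obtain ⟨P, hP⟩ := isCompact_Icc.exists_bound_of_continuousOn
    (p.continuous.continuousOn (s := Icc (-1 : ℝ) 1))
  set W := L / (1 - -1) * ∫ u in Icc (-1 : ℝ) 1, w u
  have hW : ∀ x ∈ Icc (-1 : ℝ) 1, w x ≤ W := fun x => hw.le_setIntegral le_rfl (by norm_num) le_rfl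
  refine ⟨Cf + W * P, ?_⟩
  filter_upwards [hCf, ae_restrict_mem measurableSet_Icc] with x hfx hx
  calc |w x * (f x - q x)| = |w x * f x - w x * q x| := by rw [mul_sub]
    _ ≤ |w x * f x| + |w x| * |q x| := (abs_sub _ _).trans_eq (by rw [abs_mul (w x) (q x)])
    _ ≤ Cf + W * P := by
      rw [abs_of_nonneg (hw.2.1 x), hpq]
      exact add_le_add hfx (mul_le_mul (hW x hx) (hP x hx) (abs_nonneg _)
        ((hw.2.1 x).trans (hW x hx)))

theorem setIntegral_Icc_le_two_mul_sdiff (hw : AStarWith w L) (ha : -1 ≤ a) (hab : a < b)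
    (hb : b ≤ 1) {B : Set ℝ} (hBm : MeasurableSet B) (hB : B ⊆ Icc a b)
    (hvol : volume.real B ≤ (b - a) / (2 * L)) :
    ∫ x in Icc a b, w x ≤ 2 * ∫ x in Icc a b \ B, w x := by
  set W := ∫ x in Icc a b, w x
  have hL := hw.1
  have hba : 0 < b - a := by linarith
  have hWB : ∫ x in B, w x ≤ W / 2 := calc
    ∫ x in B, w x ≤ L / (b - a) * W * volume.real B := by
      refine (Real.le_norm_self _).trans <| norm_setIntegral_le_of_norm_le_const
        ((measure_mono hB).trans_lt measure_Icc_lt_top) fun x hx => ?_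
      rw [Real.norm_of_nonneg (hw.2.1 x)]
      exact hw.le_setIntegral ha hab hb (hB hx)
    _ ≤ L / (b - a) * W * ((b - a) / (2 * L)) := by
      have := hw.setIntegral_nonneg (Icc a b)
      gcongr
    _ = W / 2 := by field_simp
  rw [setIntegral_sdiff hBm (hw.integrableOn_Icc ha hb) hB]
  linarith

theorem setIntegral_Icc_le_two_mul (hw : AStarWith w L) (ha' : -1 ≤ a') (ha'a : a' ≤ a)
    (hab : a < b) (hbb' : b ≤ b') (hb' : b' ≤ 1)
    (hlen : b' - a' ≤ (1 + 1 / (2 * L)) * (b - a)) :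
    ∫ x in Icc a' b', w x ≤ 2 * ∫ x in Icc a b, w x := by
  have hL := hw.1
  have hIJ : Icc a b ⊆ Icc a' b' := Icc_subset_Icc ha'a hbb'
  have h := hw.setIntegral_Icc_le_two_mul_sdiff ha' (ha'a.trans_lt (hab.trans_le hbb')) hb'
    (measurableSet_Icc.diff (measurableSet_Icc (a := a) (b := b))) sdiff_subset ?_
  · rwa [sdiff_sdiff_cancel_left hIJ] at h
  rw [measureReal_sdiff hIJ measurableSet_Icc measure_Icc_lt_top.ne,
    Real.volume_real_Icc_of_le (by linarith), Real.volume_real_Icc_of_le hab.le]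
  have : (b - a) / (2 * L) ≤ (b' - a') / (2 * L) := by gcongr
  have : (1 + 1 / (2 * L)) * (b - a) = (b - a) + (b - a) / (2 * L) := by ring
  linarith

theorem setIntegral_Icc_le_pow_mul (hw : AStarWith w L) (n : ℕ) :
    ∀ {a b a' b' : ℝ}, -1 ≤ a' → a' ≤ a → a < b → b ≤ b' → b' ≤ 1 →
      b' - a' ≤ (1 + 1 / (2 * L)) ^ n * (b - a) →
      ∫ x in Icc a' b', w x ≤ 2 ^ n * ∫ x in Icc a b, w x := by
  have hβ : 1 ≤ 1 + 1 / (2 * L) := by have := hw.1; simp; positivity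
  induction n with
  | zero =>
    intro a b a' b' _ ha'a _ hbb' _ hlen
    obtain rfl : a' = a := by simp at hlen; linarith
    obtain rfl : b' = b := by simp at hlen; linarith
    simp
  | succ n ih =>
    intro a b a' b' ha' ha'a hab hbb' hb' hlen
    have hI := hw.setIntegral_nonneg (Icc a b)
    rcases le_or_gt (b' - a') ((1 + 1 / (2 * L)) ^ n * (b - a)) with hJ | hJ
    · calc ∫ x in Icc a' b', w x ≤ 2 ^ n * ∫ x in Icc a b, w x := ih ha' ha'a hab hbb' hb' hJ
        _ ≤ 2 ^ (n + 1) * ∫ x in Icc a b, w x := by gcongr <;> norm_num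
    obtain ⟨c, d, ha'c, hca, hbd, hdb', hdc⟩ := exists_Icc_of_length_between ha'a hbb'
      (le_mul_of_one_le_left (by linarith) (one_le_pow₀ hβ)) hJ.le
    calc ∫ x in Icc a' b', w x ≤ 2 * ∫ x in Icc c d, w x := by
          refine hw.setIntegral_Icc_le_two_mul ha' ha'c (by linarith) hdb' hb' ?_
          rwa [hdc, ← mul_assoc, ← pow_succ']
      _ ≤ 2 * (2 ^ n * ∫ x in Icc a b, w x) := by
          gcongr
          exact ih (ha'.trans ha'c) hca hab hbd (hdb'.trans hb') hdc.le
      _ = 2 ^ (n + 1) * ∫ x in Icc a b, w x := by ring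

theorem exists_setIntegral_Icc_le_mul (hw : AStarWith w L) (c₀ : ℝ) :
    ∃ D, 0 < D ∧ ∀ a b a' b' : ℝ, -1 ≤ a' → a' ≤ a → a < b → b ≤ b' → b' ≤ 1 →
      b' - a' ≤ c₀ * (b - a) → ∫ x in Icc a' b', w x ≤ D * ∫ x in Icc a b, w x := by
  have hL := hw.1
  obtain ⟨n, hn⟩ :=
    pow_unbounded_of_one_lt c₀ (lt_add_of_pos_right 1 (by positivity : 0 < 1 / (2 * L)))
  refine ⟨2 ^ n, by positivity, fun a b a' b' ha' ha'a hab hbb' hb' hlen => ?_⟩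
  exact hw.setIntegral_Icc_le_pow_mul n ha' ha'a hab hbb' hb'
    (hlen.trans (mul_le_mul_of_nonneg_right hn.le (by linarith)))

end AStarWith

theorem exists_pairwise_le_abs_sub {B : Set ℝ} {δ : ℝ} (hδ : 0 < δ) :
    ∀ {t : ℕ}, ENNReal.ofReal (t * (2 * δ)) < volume B →
      ∃ v : Fin t → ℝ, (∀ i, v i ∈ B) ∧ Pairwise fun i j => δ ≤ |v i - v j|
  | 0, _ => ⟨Fin.elim0, fun i => i.elim0, fun i => i.elim0⟩
  | t + 1, hB => by
    obtain ⟨v, hvB, hv⟩ := exists_pairwise_le_abs_sub hδ (t := t) <|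
      (ENNReal.ofReal_le_ofReal (by gcongr; simp)).trans_lt hB
    have hU : volume (⋃ i, Metric.closedBall (v i) δ) < volume B := by
      refine (measure_iUnion_fintype_le _ _).trans_lt (lt_of_le_of_lt ?_ hB)
      simp only [Real.volume_closedBall, Finset.sum_const, Finset.card_univ, Fintype.card_fin,
        nsmul_eq_mul]
      rw [← ENNReal.ofReal_natCast, ← ENNReal.ofReal_mul (Nat.cast_nonneg _)]
      exact ENNReal.ofReal_le_ofReal (by gcongr; simp)
    obtain ⟨x, hxB, hxU⟩ := not_subset.1 fun hBU => (measure_mono hBU).not_gt hU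
    have hx : ∀ i, δ ≤ |x - v i| := fun i => by
      by_contra! h
      exact hxU (mem_iUnion.2 ⟨i, by rw [Metric.mem_closedBall, Real.dist_eq]; exact h.le⟩)
    refine ⟨Fin.snoc v x, Fin.lastCases (by simpa using hxB) (by simpa using hvB), ?_⟩
    intro i j hij
    induction i using Fin.lastCases <;> induction j using Fin.lastCases
    · exact absurd rfl hij
    · simpa using hx _
    · simpa [abs_sub_comm] using hx _
    · simpa using hv (ne_of_apply_ne Fin.castSucc hij)

theorem Polynomial.abs_eval_le_of_pairwise {p : Polynomial ℝ} {r : ℕ} (hp : p.degree < r)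
    {v : Fin r → ℝ} {δ M D x : ℝ} (hδ : 0 < δ) (hD : 0 ≤ D)
    (hv : Pairwise fun i j => δ ≤ |v i - v j|) (hpv : ∀ i, |p.eval (v i)| ≤ M)
    (hxv : ∀ i, |x - v i| ≤ D) : |p.eval x| ≤ r * ((D / δ) ^ (r - 1) * M) := by
  classical
  have hinj : Function.Injective v := fun i j hij => by
    by_contra hne
    have : δ ≤ |v i - v j| := hv hne
    rw [hij, sub_self, abs_zero] at this
    linarith
  have hbasis : ∀ i, |(Lagrange.basis Finset.univ v i).eval x| ≤ (D / δ) ^ (r - 1) := by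
    intro i
    rw [Lagrange.basis, eval_prod, Finset.abs_prod]
    calc ∏ j ∈ Finset.univ.erase i, |(Lagrange.basisDivisor (v i) (v j)).eval x|
        ≤ ∏ _j ∈ Finset.univ.erase i, D / δ := by
          refine Finset.prod_le_prod (fun _ _ => abs_nonneg _) fun j hj => ?_
          rw [Lagrange.basisDivisor, eval_mul, eval_C, eval_sub, eval_X, eval_C, abs_mul, abs_inv,
            inv_mul_eq_div]
          exact div_le_div₀ hD (hxv j) hδ (hv (Finset.ne_of_mem_erase hj).symm)
      _ = (D / δ) ^ (r - 1) := by simp [div_pow]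
  conv_lhs => rw [Lagrange.eq_interpolate (s := Finset.univ) (f := p) hinj.injOn
    (by simpa using hp), Lagrange.interpolate_apply, eval_finsetSum]
  calc |∑ i, (C (p.eval (v i)) * Lagrange.basis Finset.univ v i).eval x|
      ≤ ∑ i, |(C (p.eval (v i)) * Lagrange.basis Finset.univ v i).eval x| :=
        Finset.abs_sum_le_sum_abs _ _
    _ ≤ ∑ _i : Fin r, (D / δ) ^ (r - 1) * M := Finset.sum_le_sum fun i _ => by
        rw [eval_mul, eval_C, abs_mul, mul_comm]
        exact mul_le_mul (hbasis i) (hpv i) (abs_nonneg _) (by positivity)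
    _ = r * ((D / δ) ^ (r - 1) * M) := by simp

theorem Polynomial.abs_eval_le_of_volume_lt {p : Polynomial ℝ} {r : ℕ} (hp : p.degree < r)
    {B : Set ℝ} {δ M D x : ℝ} (hδ : 0 < δ) (hB : ENNReal.ofReal (r * (2 * δ)) < volume B)
    (hpB : ∀ y ∈ B, |p.eval y| ≤ M) (hxB : ∀ y ∈ B, |x - y| ≤ D) :
    |p.eval x| ≤ r * ((D / δ) ^ (r - 1) * M) := by
  obtain ⟨v, hvB, hv⟩ := exists_pairwise_le_abs_sub hδ hB
  obtain ⟨y, hy⟩ := nonempty_of_measure_ne_zero (pos_of_gt hB).ne'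
  exact abs_eval_le_of_pairwise hp hδ ((abs_nonneg _).trans (hxB y hy)) hv
    (fun i => hpB _ (hvB i)) fun i => hxB _ (hvB i)

/-- Remez-type inequality. A larger sublevel set would contain `r` points that are
`ε (b - a) / (2r)`-separated, and Lagrange interpolation at them would give `|p x| ≤ |p x| / 2`. -/
theorem Polynomial.exists_volume_abs_eval_lt_le {r : ℕ} (hr : 0 < r) {c₀ ε : ℝ} (hc₀ : 0 < c₀)
    (hε : 0 < ε) :
    ∃ κ > 0, ∀ p : Polynomial ℝ, p.degree < r → ∀ a b x : ℝ, a < b →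
      (∀ y ∈ Icc a b, |x - y| ≤ c₀ * (b - a)) →
      volume {y ∈ Icc a b | |p.eval y| < κ * |p.eval x|} ≤ ENNReal.ofReal (ε * (b - a)) := by
  set K := 2 * r * c₀ / ε
  have hK : 0 < K := by positivity
  set κ := (2 * r * K ^ (r - 1))⁻¹
  refine ⟨κ, by positivity, fun p hp a b x hab hx => ?_⟩
  set B := {y ∈ Icc a b | |p.eval y| < κ * |p.eval x|}
  by_contra! hB
  have hba : 0 < b - a := by linarith
  have hδ : 0 < ε * (b - a) / (2 * r) := by positivity
  have h := abs_eval_le_of_volume_lt hp hδ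
    (by rwa [show (r : ℝ) * (2 * (ε * (b - a) / (2 * r))) = ε * (b - a) by field_simp])
    (fun y (hy : y ∈ B) => hy.2.le) fun y hy => hx y hy.1
  rw [show c₀ * (b - a) / (ε * (b - a) / (2 * r)) = K by simp only [K]; field_simp] at h
  have hx0 : |p.eval x| ≤ 0 := by
    have : (r : ℝ) * (K ^ (r - 1) * (κ * |p.eval x|)) = |p.eval x| / 2 := by
      simp only [κ]
      field_simp
    linarith
  obtain ⟨y, -, hy⟩ := nonempty_of_measure_ne_zero (pos_of_gt hB).ne'
  have : 0 ≤ κ := by positivity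
  nlinarith [abs_nonneg (p.eval y)]

theorem mul_setIntegral_le_supNorm_mul_measureReal {w g : ℝ → ℝ} {S E : Set ℝ} {m : ℝ}
    (hw : ∀ x, 0 ≤ w x) (hE : MeasurableSet E) (hES : E ⊆ S) (hS : volume S ≠ ⊤)
    (hwE : IntegrableOn w E) (hbdd : EssBddOn (fun x => w x * g x) S) (hm : ∀ x ∈ E, m ≤ |g x|) :
    m * ∫ x in E, w x ≤ supNorm (fun x => w x * g x) S * volume.real S := by
  have hEfin : volume E ≠ ⊤ := ne_top_of_le_ne_top hS (measure_mono hES)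
  calc m * ∫ x in E, w x = ∫ x in E, m * w x := (integral_const_mul _ _).symm
    _ ≤ ∫ _ in E, supNorm (fun x => w x * g x) S := by
      refine setIntegral_mono_ae_restrict (hwE.const_mul m)
        (integrableOn_const hEfin) ?_
      filter_upwards [ae_restrict_of_ae_restrict_of_subset hES hbdd.ae_le_supNorm,
        ae_restrict_mem hE] with x hx hxE
      calc m * w x ≤ |g x| * w x := mul_le_mul_of_nonneg_right (hm x hxE) (hw x)
        _ = |w x * g x| := by rw [abs_mul, abs_of_nonneg (hw x), mul_comm]
        _ ≤ _ := hx
    _ = supNorm (fun x => w x * g x) S * volume.real E := by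
      rw [setIntegral_const, smul_eq_mul, mul_comm]
    _ ≤ supNorm (fun x => w x * g x) S * volume.real S := by
      have := supNorm_nonneg (fun x => w x * g x) S
      gcongr

namespace AStarWith

variable {w : ℝ → ℝ} {L a b a' b' : ℝ}

theorem abs_mul_le (hw : AStarWith w L) (ha : -1 ≤ a) (hab : a < b) (hb : b ≤ 1) {g : ℝ → ℝ}
    {M : ℝ} (hg : ∀ x ∈ Icc a b, |g x| ≤ M) {x : ℝ} (hx : x ∈ Icc a b) :
    |w x * g x| ≤ L / (b - a) * (∫ u in Icc a b, w u) * M := by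
  rw [abs_mul, abs_of_nonneg (hw.2.1 x)]
  exact mul_le_mul (hw.le_setIntegral ha hab hb hx) (hg x hx) (abs_nonneg _)
    (mul_nonneg (div_nonneg hw.1.le (by linarith)) (hw.setIntegral_nonneg _))

theorem supNorm_mul_le (hw : AStarWith w L) (ha : -1 ≤ a) (hab : a < b) (hb : b ≤ 1)
    {g : ℝ → ℝ} {M : ℝ} (hg : ∀ x ∈ Icc a b, |g x| ≤ M) :
    supNorm (fun x => w x * g x) (Icc a b) ≤ L / (b - a) * (∫ u in Icc a b, w u) * M :=
  supNorm_le_of_forall measurableSet_Icc ((abs_nonneg _).trans (hw.abs_mul_le ha hab hb hg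
    (left_mem_Icc.2 hab.le))) fun _ => hw.abs_mul_le ha hab hb hg

theorem mul_setIntegral_Icc_le_supNorm (hw : AStarWith w L) (ha : -1 ≤ a) (hab : a < b)
    (hb : b ≤ 1) {g : ℝ → ℝ} {m : ℝ} (hm : 0 ≤ m) (hg : EssBddOn (fun x => w x * g x) (Icc a b))
    {B : Set ℝ} (hBm : MeasurableSet B) (hB : B ⊆ Icc a b)
    (hvol : volume.real B ≤ (b - a) / (2 * L)) (hgB : ∀ x ∈ Icc a b \ B, m ≤ |g x|) :
    m * ∫ x in Icc a b, w x ≤ 2 * (b - a) * supNorm (fun x => w x * g x) (Icc a b) := by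
  have hlower := mul_setIntegral_le_supNorm_mul_measureReal hw.2.1 (measurableSet_Icc.diff hBm)
    sdiff_subset measure_Icc_lt_top.ne ((hw.integrableOn_Icc ha hb).mono_set sdiff_subset) hg hgB
  rw [Real.volume_real_Icc_of_le hab.le] at hlower
  calc m * ∫ x in Icc a b, w x ≤ m * (2 * ∫ x in Icc a b \ B, w x) := by
        gcongr
        exact hw.setIntegral_Icc_le_two_mul_sdiff ha hab hb hBm hB hvol
    _ = 2 * (m * ∫ x in Icc a b \ B, w x) := by ring
    _ ≤ 2 * (b - a) * supNorm (fun x => w x * g x) (Icc a b) := by linarith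

theorem exists_supNorm_mul_le (hw : AStarWith w L) {r : ℕ} (hr : 0 < r) {c₀ : ℝ}
    (hc₀ : 0 < c₀) :
    ∃ C, 0 < C ∧ ∀ g, IsPolyDeg r g → ∀ a b a' b' : ℝ, -1 ≤ a' → a' ≤ a → a ≤ b → b ≤ b' →
      b' ≤ 1 → b' - a' ≤ c₀ * (b - a) →
      supNorm (fun x => w x * g x) (Icc a' b') ≤ C * supNorm (fun x => w x * g x) (Icc a b) := by
  have hL := hw.1
  obtain ⟨D, hD, hdoubling⟩ := hw.exists_setIntegral_Icc_le_mul c₀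
  obtain ⟨κ, hκ, hremez⟩ :=
    Polynomial.exists_volume_abs_eval_lt_le hr hc₀ (by positivity : 0 < 1 / (2 * L))
  refine ⟨2 * L * D / κ, by positivity, ?_⟩
  rintro g ⟨p, hp, hpg⟩ a b a' b' ha' ha'a hab hbb' hb' hlen
  obtain rfl : g = fun x => p.eval x := funext hpg
  have hG := supNorm_nonneg (fun x => w x * p.eval x) (Icc a b)
  rcases hab.eq_or_lt with rfl | hab
  · rw [supNorm_of_volume_eq_zero (by simp; linarith)]
    positivity
  have ha := ha'.trans ha'a
  have hb := hbb'.trans hb'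
  obtain ⟨xm, hxm, hmax⟩ := isCompact_Icc.exists_isMaxOn (nonempty_Icc.2 (by linarith : a' ≤ b'))
    p.continuous.abs.continuousOn
  set S := |p.eval xm|
  have hSJ : ∀ x ∈ Icc a' b', |p.eval x| ≤ S := fun x hx => hmax hx
  set B := {y ∈ Icc a b | |p.eval y| < κ * S}
  have hBm : MeasurableSet B :=
    measurableSet_Icc.inter (measurableSet_lt p.continuous.abs.measurable measurable_const)
  have hBvol : volume.real B ≤ (b - a) / (2 * L) := by
    refine ENNReal.toReal_le_of_le_ofReal (by positivity)
      ((hremez p hp a b xm hab fun y hy => ?_).trans_eq (by ring_nf))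
    rw [abs_le]; constructor <;> linarith [hxm.1, hxm.2, hy.1, hy.2]
  have hlower := hw.mul_setIntegral_Icc_le_supNorm ha hab hb (m := κ * S) (by positivity)
    (.of_forall measurableSet_Icc fun x =>
      hw.abs_mul_le ha hab hb fun y hy => hSJ y (Icc_subset_Icc ha'a hbb' hy))
    hBm (sep_subset _ _) hBvol fun y hy => not_lt.1 fun h => hy.2 ⟨hy.1, h⟩
  have hWJ := hdoubling a b a' b' ha' ha'a hab hbb' hb' hlen
  have hWJ0 := hw.setIntegral_nonneg (Icc a' b')
  calc supNorm (fun x => w x * p.eval x) (Icc a' b')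
      ≤ L / (b' - a') * (∫ x in Icc a' b', w x) * S := hw.supNorm_mul_le ha' (by linarith) hb' hSJ
    _ ≤ L / (b - a) * (D * ∫ x in Icc a b, w x) * S := by gcongr
    _ = L * D / (κ * (b - a)) * (κ * S * ∫ x in Icc a b, w x) := by field_simp
    _ ≤ L * D / (κ * (b - a)) * (2 * (b - a) * supNorm (fun x => w x * p.eval x) (Icc a b)) := by
      gcongr
    _ = 2 * L * D / κ * supNorm (fun x => w x * p.eval x) (Icc a b) := by field_simp

end AStarWith

theorem supNorm_mul_sub_le_add_of_le_mul {w f q Q : ℝ → ℝ} {I J : Set ℝ} {C : ℝ} (hC : 0 ≤ C)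
    (hIJ : I ⊆ J) (hq : EssBddOn (fun x => w x * (f x - q x)) J)
    (hQ : EssBddOn (fun x => w x * (f x - Q x)) J)
    (hcomp : supNorm (fun x => w x * (Q x - q x)) J ≤ C * supNorm (fun x => w x * (Q x - q x)) I) :
    supNorm (fun x => w x * (f x - q x)) J ≤
      (1 + C) * supNorm (fun x => w x * (f x - Q x)) J +
        C * supNorm (fun x => w x * (f x - q x)) I := by
  have hQq : ∀ x, |w x * (Q x - q x)| ≤ |w x * (f x - q x)| + |w x * (f x - Q x)| := fun x => by
    rw [show w x * (Q x - q x) = w x * (f x - q x) - w x * (f x - Q x) by ring]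
    exact abs_sub _ _
  have hJ := supNorm_le_add (k := fun x => w x * (f x - q x)) hQ (hq.of_abs_le_add hQ hQq)
    fun x => by
      rw [show w x * (f x - q x) = w x * (f x - Q x) + w x * (Q x - q x) by ring]
      exact abs_add_le _ _
  have hI := supNorm_le_add (hq.mono hIJ) (hQ.mono hIJ) hQq
  have hQIJ := supNorm_mono_set hIJ hQ
  calc supNorm (fun x => w x * (f x - q x)) J
      ≤ supNorm (fun x => w x * (f x - Q x)) J + C * supNorm (fun x => w x * (Q x - q x)) I := by
        linarith
    _ ≤ supNorm (fun x => w x * (f x - Q x)) J +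
        C * (supNorm (fun x => w x * (f x - q x)) I + supNorm (fun x => w x * (f x - Q x)) J) := by
        gcongr
        linarith
    _ = _ := by ring

theorem stmt_19_general (M : ℕ) (z : Fin M → ℝ) (w : ℝ → ℝ) (hw : WStar M z w)
    (r : ℕ) (hr : 1 ≤ r) (c₀ c₁ : ℝ) (hc₀ : 0 < c₀) (hc₁ : 0 < c₁) :
    ∃ c : ℝ, 0 < c ∧ ∀ f : ℝ → ℝ, MemLinftyW w f → ∀ a b a' b' : ℝ,
      -1 ≤ a' → a' ≤ a → a ≤ b → b ≤ b' → b' ≤ 1 → b' - a' ≤ c₀ * (b - a) →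
      ∀ q : ℝ → ℝ, IsPolyDeg r q →
        supNorm (fun x => w x * (f x - q x)) (Icc a b) ≤ c₁ * Edeg r f (Icc a b) w →
        supNorm (fun x => w x * (f x - q x)) (Icc a' b') ≤ c * Edeg r f (Icc a' b') w := by
  obtain ⟨⟨L, hL⟩, -⟩ := hw
  obtain ⟨C, hC, hcomp⟩ := hL.exists_supNorm_mul_le hr hc₀
  refine ⟨1 + C + C * c₁, by positivity,
    fun f hf a b a' b' ha' ha'a hab hbb' hb' hlen q hq hnear => ?_⟩
  have hIJ : Icc a b ⊆ Icc a' b' := Icc_subset_Icc ha'a hbb'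
  have hbdd : ∀ g, IsPolyDeg r g → EssBddOn (fun x => w x * (f x - g x)) (Icc a' b') :=
    fun g hg => (hL.essBddOn_mul_sub hf hg).mono (Icc_subset_Icc ha' hb')
  set E := Edeg r f (Icc a' b') w
  have hqI : supNorm (fun x => w x * (f x - q x)) (Icc a b) ≤ c₁ * E :=
    hnear.trans (by gcongr; exact Edeg_mono hIJ hbdd)
  have hE : (supNorm (fun x => w x * (f x - q x)) (Icc a' b') - C * c₁ * E) / (1 + C) ≤ E := by
    refine le_Edeg fun Q hQ => (div_le_iff₀' (by positivity)).2 ?_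
    have := supNorm_mul_sub_le_add_of_le_mul hC.le hIJ (hbdd q hq) (hbdd Q hQ)
      (hcomp _ (hQ.sub hq) a b a' b' ha' ha'a hab hbb' hb' hlen)
    nlinarith
  rw [div_le_iff₀ (by positivity)] at hE
  linarith

/-- a polynomial of near best weighted approximation on `I` is also a
polynomial of near best weighted approximation on any comparable interval `J ⊇ I`. -/
theorem stmt_19 (M : ℕ) (hM : 0 < M) (z : Fin M → ℝ) (hz : StrictMono z)
    (hzI : ∀ j, z j ∈ Icc (-1 : ℝ) 1) (w : ℝ → ℝ) (hw : WStar M z w) (hw0 : ZeroOutside w)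
    (r : ℕ) (hr : 1 ≤ r) (c₀ c₁ : ℝ) (hc₀ : 0 < c₀) (hc₁ : 0 < c₁) :
    ∃ c : ℝ, 0 < c ∧ ∀ f : ℝ → ℝ, MemLinftyW w f → ∀ a b a' b' : ℝ,
      -1 ≤ a' → a' ≤ a → a ≤ b → b ≤ b' → b' ≤ 1 → b' - a' ≤ c₀ * (b - a) →
      ∀ q : ℝ → ℝ, IsPolyDeg r q →
        supNorm (fun x => w x * (f x - q x)) (Icc a b) ≤ c₁ * Edeg r f (Icc a b) w →
        supNorm (fun x => w x * (f x - q x)) (Icc a' b') ≤ c * Edeg r f (Icc a' b') w :=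
  stmt_19_general M z w hw r hr c₀ c₁ hc₀ hc₁
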